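/- Geometric lower bound on the stationary tail: under (HP1)–(HP3), for every ε > 0 there exists N such that for all n ≥ N and all t ∈ ℕ, ℙ_{π_n}(τ_{x_n} > t) ≥ (1 − ε) · λ_n^t. -/

import Mathlib

/-!
Write `s_t(y) = ℙ_y(τ_x > t)`, so that `ℙ_π(τ_x > t) = Σ_{y ≠ x} π(y) s_t(y)`, while
quasi-stationarity gives `λ^t = Σ_{y ≠ x} μ(y) s_t(y)`. With `K` the killed kernel, mixing at
time `T` bounds `λ^T μ = μ K^T ≤ μ P^T ≤ π + d` entrywise, hence
`λ^(T+t) ≤ ℙ_π(τ_x > t) + d Σ_y s_t(y) ≤ (1 + n²d) ℙ_π(τ_x > t)` by (HP3).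

It remains to see that `λ^T` is close to `1`. Started from `π`, the chain hits `x` at each step
with probability at most `π(x)`, so `Σ_y π(y) (1 - s_T(y)) ≤ T π(x) ≤ δ²`, and by Markov's
inequality the set `G` of states with `s_T ≥ 1 - δ` carries all but `δ` of the mass of `π`.
By mixing, the chain started in `G` is outside `G` at time `T` with probability at most
`δ + nd`, so it survives inside `G` with probability at least `1 - 2δ - nd`. Testing
`μ K^T = λ^T μ` against the indicator of `G`, which `μ` charges by irreducibility of `K`, gives
`λ^T ≥ 1 - 2δ - nd`.
-/

open Finset Filter

/-- The kernel of the chain killed at `x`: all entries from or to `x` are set to zero.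
For `y, z ≠ x` the powers of `killed P x` agree with the powers of the principal
submatrix `[P]_x` of `P` obtained by deleting the row and the column indexed by `x`. -/
def killed {n : ℕ} (P : Matrix (Fin n) (Fin n) ℝ) (x : Fin n) :
    Matrix (Fin n) (Fin n) ℝ :=
  Matrix.of fun y z => if y = x ∨ z = x then 0 else P y z

/-- The no-hit probability `ℙ_α(τ_x > t) = Σ_{y ≠ x} Σ_{z ≠ x} α(y)·([P]_x)^t(y,z)`. -/
def noHit {n : ℕ} (P : Matrix (Fin n) (Fin n) ℝ) (x : Fin n)
    (a : Fin n → ℝ) (t : ℕ) : ℝ :=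
  ∑ y ∈ Finset.univ.erase x, ∑ z ∈ Finset.univ.erase x, a y * ((killed P x) ^ t) y z

/-- The expected number of returns to `x` within time `T`:
`R_T(x) = Σ_{t=0}^{T} P^t(x,x)`. -/
def returns {n : ℕ} (P : Matrix (Fin n) (Fin n) ℝ) (x : Fin n) (T : ℕ) : ℝ :=
  ∑ t ∈ Finset.range (T + 1), (P ^ t) x x

open Matrix

namespace Matrix

variable {ι R : Type*} [Fintype ι] [DecidableEq ι]

section CommSemiring

variable [CommSemiring R]

lemma vecMul_pow_of_vecMul_eq_smul {M : Matrix ι ι R} {μ : ι → R} {r : R}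
    (h : μ ᵥ* M = r • μ) (t : ℕ) : μ ᵥ* M ^ t = r ^ t • μ := by
  induction t with
  | zero => simp
  | succ t ih => rw [pow_succ, ← vecMul_vecMul, ih, smul_vecMul, h, smul_smul, ← pow_succ]

lemma pow_mul_apply_eq_sum {M : Matrix ι ι R} {μ : ι → R} {r : R}
    (h : μ ᵥ* M = r • μ) (t : ℕ) (j : ι) : r ^ t * μ j = ∑ i, μ i * (M ^ t) i j := by
  simpa [vecMul, dotProduct] using (congrFun (vecMul_pow_of_vecMul_eq_smul h t) j).symm

variable [PartialOrder R] [IsOrderedRing R]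

lemma pow_apply_le_pow_apply {K P : Matrix ι ι R} (hK : ∀ i j, 0 ≤ K i j)
    (hKP : ∀ i j, K i j ≤ P i j) (t : ℕ) (i j : ι) : (K ^ t) i j ≤ (P ^ t) i j := by
  induction t generalizing j with
  | zero => exact le_rfl
  | succ t ih =>
    rw [pow_succ, pow_succ, mul_apply, mul_apply]
    exact sum_le_sum fun k _ => mul_le_mul (ih k) (hKP k j) (hK k j)
      (pow_apply_nonneg (fun a b => (hK a b).trans (hKP a b)) t i k)

lemma sum_mul_pow_apply_le {K P : Matrix ι ι R} {π : ι → R} (hK : ∀ i j, 0 ≤ K i j)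
    (hKP : ∀ i j, K i j ≤ P i j) (hπ : ∀ i, 0 ≤ π i) (hπP : π ᵥ* P = π)
    (s : Finset ι) (t : ℕ) (j : ι) : ∑ i ∈ s, π i * (K ^ t) i j ≤ π j :=
  calc ∑ i ∈ s, π i * (K ^ t) i j ≤ ∑ i, π i * (K ^ t) i j :=
        sum_le_univ_sum_of_nonneg fun i => mul_nonneg (hπ i) (pow_apply_nonneg hK t i j)
    _ ≤ ∑ i, π i * (P ^ t) i j := sum_le_sum fun i _ =>
        mul_le_mul_of_nonneg_left (pow_apply_le_pow_apply hK hKP t i j) (hπ i)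
    _ = π j := by
        rw [← pow_mul_apply_eq_sum (r := 1) (by rw [one_smul, hπP]), one_pow, one_mul]

lemma pow_mul_le_add_of_pow_apply_le {K P : Matrix ι ι R} {μ π : ι → R} {r d : R}
    (hK : ∀ i j, 0 ≤ K i j) (hKP : ∀ i j, K i j ≤ P i j) (hμ : ∀ i, 0 ≤ μ i)
    (hμ1 : ∑ i, μ i = 1) (hμK : μ ᵥ* K = r • μ) {T : ℕ}
    (hmix : ∀ i j, (P ^ T) i j ≤ π j + d) (j : ι) : r ^ T * μ j ≤ π j + d :=
  calc r ^ T * μ j = ∑ i, μ i * (K ^ T) i j := pow_mul_apply_eq_sum hμK T j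
    _ ≤ ∑ i, μ i * (π j + d) := sum_le_sum fun i _ => mul_le_mul_of_nonneg_left
        ((pow_apply_le_pow_apply hK hKP T i j).trans (hmix i j)) (hμ i)
    _ = π j + d := by rw [← sum_mul, hμ1, one_mul]

end CommSemiring

section StrictOrderedRing

variable [CommRing R] [LinearOrder R] [IsStrictOrderedRing R]

lemma pos_of_vecMul_eq_smul {M : Matrix ι ι R} {μ : ι → R} {r : R} (hM : ∀ i j, 0 ≤ M i j)
    (hμ : ∀ i, 0 ≤ μ i) (hμM : μ ᵥ* M = r • μ) {i j : ι} {t : ℕ} (hi : 0 < μ i)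
    (hij : 0 < (M ^ t) i j) : 0 < μ j := by
  have hpos : 0 < r ^ t * μ j :=
    calc 0 < μ i * (M ^ t) i j := mul_pos hi hij
      _ ≤ ∑ k, μ k * (M ^ t) k j := single_le_sum
          (fun k _ => mul_nonneg (hμ k) (pow_apply_nonneg hM t k j)) (mem_univ i)
      _ = r ^ t * μ j := (pow_mul_apply_eq_sum hμM t j).symm
  refine (hμ j).lt_of_ne fun h => ?_
  rw [← h, mul_zero] at hpos
  exact hpos.false

lemma le_of_vecMul_eq_smul_of_le_sum {M : Matrix ι ι R} {μ : ι → R} {r a : R}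
    (hM : ∀ i j, 0 ≤ M i j) (hμ : ∀ i, 0 ≤ μ i) (hμM : μ ᵥ* M = r • μ) {S : Finset ι}
    (hS : ∀ i ∈ S, a ≤ ∑ j ∈ S, M i j) (hμS : 0 < ∑ i ∈ S, μ i) : a ≤ r := by
  refine le_of_mul_le_mul_right ?_ hμS
  calc a * ∑ i ∈ S, μ i = ∑ i ∈ S, μ i * a := by rw [mul_sum]; simp only [mul_comm]
    _ ≤ ∑ i ∈ S, μ i * ∑ j ∈ S, M i j :=
        sum_le_sum fun i hi => mul_le_mul_of_nonneg_left (hS i hi) (hμ i)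
    _ ≤ ∑ i, μ i * ∑ j ∈ S, M i j := sum_le_univ_sum_of_nonneg fun i =>
        mul_nonneg (hμ i) (sum_nonneg fun j _ => hM i j)
    _ = ∑ j ∈ S, ∑ i, μ i * M i j := by simp only [mul_sum]; exact sum_comm
    _ = ∑ j ∈ S, r * μ j := sum_congr rfl fun j _ => by
        simpa using (pow_mul_apply_eq_sum hμM 1 j).symm
    _ = r * ∑ i ∈ S, μ i := (mul_sum _ _ _).symm

end StrictOrderedRing

end Matrix

section KilledChain

variable {n : ℕ} (P : Matrix (Fin n) (Fin n) ℝ) (x : Fin n)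

lemma killed_nonneg (hP : ∀ i j, 0 ≤ P i j) (i j : Fin n) : 0 ≤ killed P x i j := by
  simp only [killed, of_apply]
  split_ifs
  exacts [le_rfl, hP i j]

lemma killed_le (hP : ∀ i j, 0 ≤ P i j) (i j : Fin n) : killed P x i j ≤ P i j := by
  simp only [killed, of_apply]
  split_ifs
  exacts [hP i j, le_rfl]

lemma killed_self_apply (z : Fin n) : killed P x x z = 0 := by
  simp [killed]

lemma sum_killed_apply (hP : ∀ i, ∑ j, P i j = 1) {v : Fin n} (hv : v ≠ x) :
    ∑ z ∈ univ.erase x, killed P x v z = 1 - P v x := by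
  rw [← hP v, ← sum_erase_add _ _ (mem_univ x), add_sub_cancel_right]
  exact sum_congr rfl fun z hz => by simp [killed, hv, ne_of_mem_erase hz]

/-- `survival P x t y = ℙ_y(τ_x > t)` for `y ≠ x`. -/
def survival (t : ℕ) (y : Fin n) : ℝ := ∑ z ∈ univ.erase x, (killed P x ^ t) y z

lemma noHit_eq_sum_mul_survival (a : Fin n → ℝ) (t : ℕ) :
    noHit P x a t = ∑ y ∈ univ.erase x, a y * survival P x t y := by
  simp only [noHit, survival, mul_sum]

lemma survival_zero_of_ne {y : Fin n} (hy : y ≠ x) : survival P x 0 y = 1 := by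
  simp [survival, one_apply, hy]

variable {P}

lemma survival_nonneg (hP : ∀ i j, 0 ≤ P i j) (t : ℕ) (y : Fin n) : 0 ≤ survival P x t y :=
  sum_nonneg fun z _ => pow_apply_nonneg (killed_nonneg P x hP) t y z

lemma survival_le_one (hP : P ∈ rowStochastic ℝ (Fin n)) (t : ℕ) (y : Fin n) :
    survival P x t y ≤ 1 :=
  calc survival P x t y ≤ ∑ z, (killed P x ^ t) y z := sum_le_univ_sum_of_nonneg fun z =>
        pow_apply_nonneg (killed_nonneg P x fun _ _ => nonneg_of_mem_rowStochastic hP) t y z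
    _ ≤ ∑ z, (P ^ t) y z := sum_le_sum fun z _ => pow_apply_le_pow_apply
        (killed_nonneg P x fun _ _ => nonneg_of_mem_rowStochastic hP)
        (killed_le P x fun _ _ => nonneg_of_mem_rowStochastic hP) t y z
    _ = 1 := sum_row_of_mem_rowStochastic (pow_mem hP t) y

lemma survival_sub_survival_succ (hP : ∀ i, ∑ j, P i j = 1) (t : ℕ) (y : Fin n) :
    survival P x t y - survival P x (t + 1) y =
      ∑ v ∈ univ.erase x, (killed P x ^ t) y v * P v x := by
  have hsucc : survival P x (t + 1) y =
      ∑ v ∈ univ.erase x, (killed P x ^ t) y v * (1 - P v x) :=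
    calc survival P x (t + 1) y
        = ∑ v, (killed P x ^ t) y v * ∑ z ∈ univ.erase x, killed P x v z := by
          simp only [survival, pow_succ, mul_apply, mul_sum]
          exact sum_comm
      _ = ∑ v ∈ univ.erase x, (killed P x ^ t) y v * (1 - P v x) := by
          rw [← add_sum_erase _ _ (mem_univ x)]
          simp only [killed_self_apply, sum_const_zero, mul_zero, zero_add]
          exact sum_congr rfl fun v hv => by rw [sum_killed_apply P x hP (ne_of_mem_erase hv)]
  rw [hsucc, survival, ← sum_sub_distrib]
  exact sum_congr rfl fun v _ => by ring

end KilledChain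

section Stationary

variable {n : ℕ} {P : Matrix (Fin n) (Fin n) ℝ} {x : Fin n} {pi : Fin n → ℝ}

lemma noHit_zero (hpi1 : ∑ y, pi y = 1) : noHit P x pi 0 = 1 - pi x := by
  rw [noHit_eq_sum_mul_survival, ← hpi1, ← sum_erase_add _ _ (mem_univ x), add_sub_cancel_right]
  exact sum_congr rfl fun y hy => by rw [survival_zero_of_ne P x (ne_of_mem_erase hy), mul_one]

lemma noHit_sub_noHit_succ_le (hP : P ∈ rowStochastic ℝ (Fin n)) (hpi : ∀ y, 0 ≤ pi y)
    (hpiP : pi ᵥ* P = pi) (t : ℕ) : noHit P x pi t - noHit P x pi (t + 1) ≤ pi x := by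
  have hP0 : ∀ i j, 0 ≤ P i j := fun _ _ => nonneg_of_mem_rowStochastic hP
  calc noHit P x pi t - noHit P x pi (t + 1)
      = ∑ y ∈ univ.erase x, pi y * ∑ v ∈ univ.erase x, (killed P x ^ t) y v * P v x := by
        simp only [noHit_eq_sum_mul_survival, ← sum_sub_distrib, ← mul_sub,
          survival_sub_survival_succ x (sum_row_of_mem_rowStochastic hP)]
    _ = ∑ v ∈ univ.erase x, (∑ y ∈ univ.erase x, pi y * (killed P x ^ t) y v) * P v x := by
        simp only [mul_sum, sum_mul, mul_assoc]
        exact sum_comm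
    _ ≤ ∑ v ∈ univ.erase x, pi v * P v x := sum_le_sum fun v _ => mul_le_mul_of_nonneg_right
        (sum_mul_pow_apply_le (killed_nonneg P x hP0) (killed_le P x hP0) hpi hpiP _ t v)
        (hP0 v x)
    _ ≤ ∑ v, pi v * P v x := sum_le_univ_sum_of_nonneg fun v => mul_nonneg (hpi v) (hP0 v x)
    _ = pi x := by simpa [vecMul, dotProduct] using congrFun hpiP x

lemma one_sub_mul_le_noHit (hP : P ∈ rowStochastic ℝ (Fin n)) (hpi : ∀ y, 0 ≤ pi y)
    (hpi1 : ∑ y, pi y = 1) (hpiP : pi ᵥ* P = pi) (t : ℕ) :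
    1 - (t + 1) * pi x ≤ noHit P x pi t := by
  induction t with
  | zero => simp [noHit_zero hpi1]
  | succ t ih =>
    have := noHit_sub_noHit_succ_le (x := x) hP hpi hpiP t
    push_cast
    linarith

lemma sum_mul_one_sub_survival_le (hP : P ∈ rowStochastic ℝ (Fin n)) (hpi : ∀ y, 0 ≤ pi y)
    (hpi1 : ∑ y, pi y = 1) (hpiP : pi ᵥ* P = pi) (T : ℕ) :
    ∑ y ∈ univ.erase x, pi y * (1 - survival P x T y) ≤ T * pi x := by
  have hsplit : ∑ y ∈ univ.erase x, pi y * (1 - survival P x T y) =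
      (1 - pi x) - noHit P x pi T := by
    simp only [mul_sub, mul_one, sum_sub_distrib, noHit_eq_sum_mul_survival]
    rw [sum_erase_eq_sub (mem_univ x), hpi1]
  have := one_sub_mul_le_noHit (x := x) hP hpi hpi1 hpiP T
  linarith

end Stationary

section QuasiStationary

variable {n : ℕ} {P : Matrix (Fin n) (Fin n) ℝ} {x : Fin n} {pi mu : Fin n → ℝ} {lam : ℝ}

lemma sum_mul_survival_eq_pow (hmux : mu x = 0) (hmu1 : ∑ y, mu y = 1)
    (hmuqs : mu ᵥ* killed P x = lam • mu) (t : ℕ) :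
    ∑ y ∈ univ.erase x, mu y * survival P x t y = lam ^ t :=
  calc ∑ y ∈ univ.erase x, mu y * survival P x t y
      = ∑ z ∈ univ.erase x, ∑ y, mu y * (killed P x ^ t) y z := by
        simp only [survival, mul_sum]
        rw [sum_comm]
        exact sum_congr rfl fun z _ => sum_erase _ (by rw [hmux, zero_mul])
    _ = ∑ z ∈ univ.erase x, lam ^ t * mu z :=
        sum_congr rfl fun z _ => (pow_mul_apply_eq_sum hmuqs t z).symm
    _ = lam ^ t := by rw [← mul_sum, sum_erase_eq_sub (mem_univ x), hmu1, hmux, sub_zero, mul_one]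

lemma pos_of_vecMul_killed_eq_smul (hP : ∀ i j, 0 ≤ P i j)
    (hkirr : ∀ y z, y ≠ x → z ≠ x → ∃ t : ℕ, 0 < (killed P x ^ t) y z)
    (hmu : ∀ y, 0 ≤ mu y) (hmux : mu x = 0) (hmu1 : ∑ y, mu y = 1)
    (hmuqs : mu ᵥ* killed P x = lam • mu) {z : Fin n} (hz : z ≠ x) : 0 < mu z := by
  obtain ⟨y, -, hy⟩ : ∃ y ∈ univ, (0 : ℝ) < mu y :=
    exists_lt_of_sum_lt (by simp [hmu1] : ∑ _ : Fin n, (0 : ℝ) < ∑ y, mu y)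
  obtain ⟨t, ht⟩ := hkirr y z (fun h => by simp [h, hmux] at hy) hz
  exact pos_of_vecMul_eq_smul (killed_nonneg P x hP) hmu hmuqs hy ht

lemma pow_mul_pow_le_noHit (hP : ∀ i j, 0 ≤ P i j) (hmu : ∀ y, 0 ≤ mu y) (hmux : mu x = 0)
    (hmu1 : ∑ y, mu y = 1) (hmuqs : mu ᵥ* killed P x = lam • mu) {T : ℕ} {d C : ℝ}
    (hmix : ∀ i j, (P ^ T) i j ≤ pi j + d) (hd : 0 ≤ d) (hC : ∀ y, 1 ≤ C * pi y) (t : ℕ) :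
    lam ^ T * lam ^ t ≤ (1 + C * d) * noHit P x pi t :=
  calc lam ^ T * lam ^ t = ∑ y ∈ univ.erase x, lam ^ T * mu y * survival P x t y := by
        simp only [← sum_mul_survival_eq_pow hmux hmu1 hmuqs t, mul_sum, mul_assoc]
    _ ≤ ∑ y ∈ univ.erase x, (pi y + d * (C * pi y)) * survival P x t y :=
        sum_le_sum fun y _ => mul_le_mul_of_nonneg_right
          ((pow_mul_le_add_of_pow_apply_le (killed_nonneg P x hP) (killed_le P x hP) hmu hmu1
            hmuqs hmix y).trans (by nlinarith [hC y])) (survival_nonneg x hP t y)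
    _ = (1 + C * d) * noHit P x pi t := by
        rw [noHit_eq_sum_mul_survival, mul_sum]
        exact sum_congr rfl fun y _ => by ring

variable {T : ℕ} {δ d : ℝ}

lemma sum_filter_survival_lt_le (hP : P ∈ rowStochastic ℝ (Fin n)) (hpi : ∀ y, 0 ≤ pi y)
    (hpi1 : ∑ y, pi y = 1) (hpiP : pi ᵥ* P = pi) (hδ : 0 < δ) (hTpi : T * pi x ≤ δ ^ 2) :
    ∑ y ∈ (univ.erase x).filter (fun y => survival P x T y < 1 - δ), pi y ≤ δ := by
  refine le_of_mul_le_mul_right ?_ hδ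
  calc (∑ y ∈ (univ.erase x).filter (fun y => survival P x T y < 1 - δ), pi y) * δ
      ≤ ∑ y ∈ (univ.erase x).filter (fun y => survival P x T y < 1 - δ),
          pi y * (1 - survival P x T y) := by
        rw [sum_mul]
        exact sum_le_sum fun y hy =>
          mul_le_mul_of_nonneg_left (by linarith [(mem_filter.1 hy).2]) (hpi y)
    _ ≤ ∑ y ∈ univ.erase x, pi y * (1 - survival P x T y) :=
        sum_le_sum_of_subset_of_nonneg (filter_subset _ _) fun y _ _ =>
          mul_nonneg (hpi y) (sub_nonneg.2 (survival_le_one x hP T y))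
    _ ≤ T * pi x := sum_mul_one_sub_survival_le hP hpi hpi1 hpiP T
    _ ≤ δ * δ := by rwa [← sq]

lemma le_sum_pow_killed_apply_filter (hP : P ∈ rowStochastic ℝ (Fin n))
    (hpi : ∀ y, 0 ≤ pi y) (hpi1 : ∑ y, pi y = 1) (hpiP : pi ᵥ* P = pi)
    (hmix : ∀ i j, (P ^ T) i j ≤ pi j + d) (hd : 0 ≤ d) (hδ : 0 < δ)
    (hTpi : T * pi x ≤ δ ^ 2) {w : Fin n} (hw : 1 - δ ≤ survival P x T w) :
    1 - 2 * δ - n * d ≤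
      ∑ z ∈ (univ.erase x).filter (fun y => 1 - δ ≤ survival P x T y), (killed P x ^ T) w z := by
  have hP0 : ∀ i j, 0 ≤ P i j := fun _ _ => nonneg_of_mem_rowStochastic hP
  have hsplit := sum_filter_add_sum_filter_not (univ.erase x)
    (fun y => 1 - δ ≤ survival P x T y) (fun z => (killed P x ^ T) w z)
  simp only [not_le] at hsplit
  set B := (univ.erase x).filter (fun y => survival P x T y < 1 - δ)
  have hcard : (B.card : ℝ) ≤ n := by
    exact_mod_cast (card_le_univ B).trans_eq (Fintype.card_fin n)
  have hB : ∑ z ∈ B, (killed P x ^ T) w z ≤ δ + n * d :=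
    calc ∑ z ∈ B, (killed P x ^ T) w z ≤ ∑ z ∈ B, (pi z + d) := sum_le_sum fun z _ =>
          (pow_apply_le_pow_apply (killed_nonneg P x hP0) (killed_le P x hP0) T w z).trans
            (hmix w z)
      _ = ∑ z ∈ B, pi z + B.card * d := by rw [sum_add_distrib, sum_const, nsmul_eq_mul]
      _ ≤ δ + n * d := add_le_add (sum_filter_survival_lt_le hP hpi hpi1 hpiP hδ hTpi)
          (mul_le_mul_of_nonneg_right hcard hd)
  have hw' : survival P x T w = ∑ z ∈ univ.erase x, (killed P x ^ T) w z := rfl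
  linarith

lemma one_sub_le_pow_of_mix (hP : P ∈ rowStochastic ℝ (Fin n)) (hpi : ∀ y, 0 ≤ pi y)
    (hpi1 : ∑ y, pi y = 1) (hpiP : pi ᵥ* P = pi)
    (hkirr : ∀ y z, y ≠ x → z ≠ x → ∃ t : ℕ, 0 < (killed P x ^ t) y z)
    (hmu : ∀ y, 0 ≤ mu y) (hmux : mu x = 0) (hmu1 : ∑ y, mu y = 1)
    (hmuqs : mu ᵥ* killed P x = lam • mu) (hmix : ∀ i j, (P ^ T) i j ≤ pi j + d) (hd : 0 ≤ d)
    (hδ : 0 < δ) (hTpi : T * pi x ≤ δ ^ 2) (hpix : pi x + δ < 1) :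
    1 - 2 * δ - n * d ≤ lam ^ T := by
  have hP0 : ∀ i j, 0 ≤ P i j := fun _ _ => nonneg_of_mem_rowStochastic hP
  set G := (univ.erase x).filter (fun y => 1 - δ ≤ survival P x T y)
  have hGpi : 0 < ∑ y ∈ G, pi y := by
    have hsplit := sum_filter_add_sum_filter_not (univ.erase x)
      (fun y => 1 - δ ≤ survival P x T y) pi
    simp only [not_le, sum_erase_eq_sub (mem_univ x), hpi1] at hsplit
    linarith [sum_filter_survival_lt_le hP hpi hpi1 hpiP hδ hTpi]
  obtain ⟨w, hw⟩ : G.Nonempty := nonempty_of_sum_ne_zero hGpi.ne'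
  refine le_of_vecMul_eq_smul_of_le_sum (pow_apply_nonneg (killed_nonneg P x hP0) T) hmu
    (vecMul_pow_of_vecMul_eq_smul hmuqs T)
    (fun z hz => le_sum_pow_killed_apply_filter hP hpi hpi1 hpiP hmix hd hδ hTpi
      (mem_filter.1 hz).2) ?_
  exact sum_pos' (fun y _ => hmu y) ⟨w, hw, pos_of_vecMul_killed_eq_smul hP0 hkirr hmu hmux hmu1
    hmuqs (ne_of_mem_erase (mem_filter.1 hw).1)⟩

lemma one_sub_mul_pow_le_noHit (hP : P ∈ rowStochastic ℝ (Fin n))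
    (hpi1 : ∑ y, pi y = 1) (hpiP : pi ᵥ* P = pi)
    (hkirr : ∀ y z, y ≠ x → z ≠ x → ∃ t : ℕ, 0 < (killed P x ^ t) y z) (hlam : 0 < lam)
    (hmu : ∀ y, 0 ≤ mu y) (hmux : mu x = 0) (hmu1 : ∑ y, mu y = 1)
    (hmuqs : mu ᵥ* killed P x = lam • mu) {η : ℝ} (hη : 0 < η) (hη4 : η ≤ 1 / 4)
    (hmix : ∀ i j, (P ^ T) i j ≤ pi j + d) (hd : 0 ≤ d) (hnd : (n : ℝ) ^ 2 * d ≤ η)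
    (hpin : ∀ y, 1 ≤ (n : ℝ) ^ 2 * pi y) (hT : 1 ≤ T) (hTpi : T * pi x ≤ η ^ 2) (t : ℕ) :
    (1 - 4 * η) * lam ^ t ≤ noHit P x pi t := by
  have hP0 : ∀ i j, 0 ≤ P i j := fun _ _ => nonneg_of_mem_rowStochastic hP
  have hpi : ∀ y, 0 ≤ pi y := fun y =>
    (pos_of_mul_pos_right (one_pos.trans_le (hpin y)) (sq_nonneg _)).le
  have hn : (1 : ℝ) ≤ n := by exact_mod_cast x.pos
  have hpix : pi x ≤ η ^ 2 := (le_mul_of_one_le_left (hpi x) (by exact_mod_cast hT)).trans hTpi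
  have hlamT : 1 - 3 * η ≤ lam ^ T := by
    refine le_trans ?_ (one_sub_le_pow_of_mix hP hpi hpi1 hpiP hkirr hmu hmux hmu1 hmuqs hmix
      hd hη hTpi (by nlinarith))
    nlinarith
  have hnoHit : 0 ≤ noHit P x pi t := by
    rw [noHit_eq_sum_mul_survival]
    exact sum_nonneg fun y _ => mul_nonneg (hpi y) (survival_nonneg x hP0 t y)
  have hmain := pow_mul_pow_le_noHit hP0 hmu hmux hmu1 hmuqs hmix hd hpin t
  -- `(1 - 4η) (1 + η) ≤ 1 - 3η ≤ λ^T` and `1 + n²d ≤ 1 + η`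
  nlinarith [pow_pos hlam t]

end QuasiStationary

lemma le_add_div_sq_of_rpow_mul_abs_sub_lt {a b η c : ℝ} {n : ℕ} (hn : 1 ≤ n) (hc : 2 ≤ c)
    (h : (n : ℝ) ^ c * |a - b| < η) : a ≤ b + η / (n : ℝ) ^ 2 := by
  have hn2c : (n : ℝ) ^ 2 ≤ (n : ℝ) ^ c := by
    rw [← Real.rpow_natCast]
    exact Real.rpow_le_rpow_of_exponent_le (by exact_mod_cast hn) (by push_cast; exact hc)
  have hlt := (mul_le_mul_of_nonneg_right hn2c (abs_nonneg _)).trans_lt h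
  have habs : |a - b| ≤ η / (n : ℝ) ^ 2 := by
    rw [le_div_iff₀ (by positivity)]
    linarith
  linarith [le_abs_self (a - b)]

theorem geometric_lower_bound_stationary_tail_general
    (P : (n : ℕ) → Matrix (Fin n) (Fin n) ℝ)
    (pi : (n : ℕ) → Fin n → ℝ)
    (x : (n : ℕ) → Fin n)
    (T : ℕ → ℕ) (c : ℝ)
    (hc : 2 < c)
    (hT : Filter.Tendsto T Filter.atTop Filter.atTop)
    (hnn : ∀ n : ℕ, 2 ≤ n → ∀ y z : Fin n, 0 ≤ P n y z)
    (hrow : ∀ n : ℕ, 2 ≤ n → ∀ y : Fin n, ∑ z, P n y z = 1)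
    (hpisum : ∀ n : ℕ, 2 ≤ n → ∑ y, pi n y = 1)
    (hpistat : ∀ n : ℕ, 2 ≤ n → Matrix.vecMul (pi n) (P n) = pi n)
    (hkirr : ∀ n : ℕ, 2 ≤ n → ∀ y z : Fin n, y ≠ x n → z ≠ x n →
      ∃ t : ℕ, 0 < ((killed (P n) (x n)) ^ t) y z)
    (lam : ℕ → ℝ) (mu : (n : ℕ) → Fin n → ℝ)
    (hlam : ∀ n : ℕ, 2 ≤ n → lam n ∈ Set.Ioo (0 : ℝ) 1)
    (hmunn : ∀ n : ℕ, 2 ≤ n → ∀ y : Fin n, 0 ≤ mu n y)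
    (hmux : ∀ n : ℕ, 2 ≤ n → mu n (x n) = 0)
    (hmusum : ∀ n : ℕ, 2 ≤ n → ∑ y, mu n y = 1)
    (hmuqs : ∀ n : ℕ, 2 ≤ n →
      Matrix.vecMul (mu n) (killed (P n) (x n)) = lam n • mu n)
    (HP1 : ∀ ε : ℝ, 0 < ε → ∃ N : ℕ, ∀ n : ℕ, N ≤ n → ∀ y z : Fin n,
      (n : ℝ) ^ c * |(P n ^ T n) y z - pi n z| < ε)
    (HP2 : ∀ ε : ℝ, 0 < ε → ∃ N : ℕ, ∀ n : ℕ, N ≤ n → ∀ y : Fin n,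
      (T n : ℝ) * pi n y < ε)
    (HP3 : ∀ M : ℝ, ∃ N : ℕ, ∀ n : ℕ, N ≤ n → ∀ y : Fin n,
      M < (n : ℝ) ^ 2 * pi n y)
    :
    ∀ ε : ℝ, 0 < ε → ∃ N : ℕ, ∀ n : ℕ, N ≤ n → ∀ t : ℕ,
      (1 - ε) * lam n ^ t ≤ noHit (P n) (x n) (pi n) t := by
  intro ε hε
  set η := min ε 1 / 4 with hη_def
  have hη : 0 < η := by positivity
  have hηε : 4 * η ≤ ε := by linarith [min_le_left ε 1]
  have hη4 : η ≤ 1 / 4 := by linarith [min_le_right ε 1]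
  obtain ⟨N₁, hN₁⟩ := HP1 η hη
  obtain ⟨N₂, hN₂⟩ := HP2 (η ^ 2) (by positivity)
  obtain ⟨N₃, hN₃⟩ := HP3 1
  obtain ⟨N₄, hN₄⟩ := eventually_atTop.1 (hT.eventually_ge_atTop 1)
  refine ⟨max (max N₁ N₂) (max N₃ (max N₄ 2)), fun n hn t => ?_⟩
  simp only [max_le_iff] at hn
  obtain ⟨⟨hn₁, hn₂⟩, hn₃, hn₄, hn⟩ := hn
  have hmix : ∀ y z, (P n ^ T n) y z ≤ pi n z + η / (n : ℝ) ^ 2 := fun y z =>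
    le_add_div_sq_of_rpow_mul_abs_sub_lt (by omega) hc.le (hN₁ n hn₁ y z)
  calc (1 - ε) * lam n ^ t ≤ (1 - 4 * η) * lam n ^ t :=
        mul_le_mul_of_nonneg_right (by linarith) (pow_pos (hlam n hn).1 t).le
    _ ≤ noHit (P n) (x n) (pi n) t := one_sub_mul_pow_le_noHit
        (mem_rowStochastic_iff_sum.2 ⟨hnn n hn, hrow n hn⟩) (hpisum n hn) (hpistat n hn)
        (hkirr n hn) (hlam n hn).1 (hmunn n hn) (hmux n hn) (hmusum n hn) (hmuqs n hn) hη
        hη4 hmix (by positivity)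
        (by rw [mul_div_cancel₀ _ (by positivity)]) (fun y => (hN₃ n hn₃ y).le) (hN₄ n hn₄)
        (hN₂ n hn₂ (x n)).le t

theorem geometric_lower_bound_stationary_tail
    (P : (n : ℕ) → Matrix (Fin n) (Fin n) ℝ)
    (pi : (n : ℕ) → Fin n → ℝ)
    (x : (n : ℕ) → Fin n)
    (T : ℕ → ℕ) (c : ℝ)
    (hc : 2 < c)
    (hT : Filter.Tendsto T Filter.atTop Filter.atTop)
    (hnn : ∀ n : ℕ, 2 ≤ n → ∀ y z : Fin n, 0 ≤ P n y z)
    (hrow : ∀ n : ℕ, 2 ≤ n → ∀ y : Fin n, ∑ z, P n y z = 1)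
    (hirr : ∀ n : ℕ, 2 ≤ n → ∀ y z : Fin n, ∃ t : ℕ, 0 < (P n ^ t) y z)
    (hpinn : ∀ n : ℕ, 2 ≤ n → ∀ y : Fin n, 0 ≤ pi n y)
    (hpisum : ∀ n : ℕ, 2 ≤ n → ∑ y, pi n y = 1)
    (hpistat : ∀ n : ℕ, 2 ≤ n → Matrix.vecMul (pi n) (P n) = pi n)
    (hpiuniq : ∀ n : ℕ, 2 ≤ n → ∀ rho : Fin n → ℝ, (∀ y, 0 ≤ rho y) →
      (∑ y, rho y = 1) → Matrix.vecMul rho (P n) = rho → rho = pi n)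
    (hkirr : ∀ n : ℕ, 2 ≤ n → ∀ y z : Fin n, y ≠ x n → z ≠ x n →
      ∃ t : ℕ, 0 < ((killed (P n) (x n)) ^ t) y z)
    (lam : ℕ → ℝ) (mu : (n : ℕ) → Fin n → ℝ)
    (hlam : ∀ n : ℕ, 2 ≤ n → lam n ∈ Set.Ioo (0 : ℝ) 1)
    (hmunn : ∀ n : ℕ, 2 ≤ n → ∀ y : Fin n, 0 ≤ mu n y)
    (hmux : ∀ n : ℕ, 2 ≤ n → mu n (x n) = 0)
    (hmusum : ∀ n : ℕ, 2 ≤ n → ∑ y, mu n y = 1)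
    (hmuqs : ∀ n : ℕ, 2 ≤ n →
      Matrix.vecMul (mu n) (killed (P n) (x n)) = lam n • mu n)
    (HP1 : ∀ ε : ℝ, 0 < ε → ∃ N : ℕ, ∀ n : ℕ, N ≤ n → ∀ y z : Fin n,
      (n : ℝ) ^ c * |(P n ^ T n) y z - pi n z| < ε)
    (HP2 : ∀ ε : ℝ, 0 < ε → ∃ N : ℕ, ∀ n : ℕ, N ≤ n → ∀ y : Fin n,
      (T n : ℝ) * pi n y < ε)
    (HP3 : ∀ M : ℝ, ∃ N : ℕ, ∀ n : ℕ, N ≤ n → ∀ y : Fin n,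
      M < (n : ℝ) ^ 2 * pi n y)
    :
    ∀ ε : ℝ, 0 < ε → ∃ N : ℕ, ∀ n : ℕ, N ≤ n → ∀ t : ℕ,
      (1 - ε) * lam n ^ t ≤ noHit (P n) (x n) (pi n) t :=
  geometric_lower_bound_stationary_tail_general P pi x T c hc hT hnn hrow hpisum hpistat hkirr lam
    mu hlam hmunn hmux hmusum hmuqs HP1 HP2 HP3
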